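/- Let $k$ be a field and $A = k[s,t]/(st)$ graded with $|s|=1$, $|t|=-1$. Then the graded-endomorphism ring of $M(m,I)$ (degree-preserving $A$-module endomorphisms) is isomorphic to $k$; in particular it is a local ring. -/

import Mathlib

open scoped Classical

namespace Paper

variable (k : Type) [Field k]

/-- A nonnegatively graded module over `A = k[s,t]/(st)`, given componentwise. -/
structure GM where
  M : ℕ → Type
  [acg : ∀ i, AddCommGroup (M i)]
  [mod : ∀ i, Module k (M i)]
  s : ∀ i, M i →ₗ[k] M (i + 1)
  t : ∀ i, M (i + 1) →ₗ[k] M i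
  ts : ∀ i x, t i (s i x) = 0
  st : ∀ i x, s i (t i x) = 0

attribute [instance] GM.acg GM.mod

variable {k}

/-- Morphisms of graded `A`-modules. -/
structure Hom (M N : GM k) where
  f : ∀ i, M.M i →ₗ[k] N.M i
  comm_s : ∀ i x, f (i + 1) (M.s i x) = N.s i (f i x)
  comm_t : ∀ i x, f i (M.t i x) = N.t i (f (i + 1) x)

/-- Isomorphism of graded `A`-modules. -/
def GMIso (M N : GM k) : Prop := ∃ f : Hom M N, ∀ i, Function.Bijective (f.f i)

/-- A morphism is (componentwise) injective. -/
def InjHom {M N : GM k} (f : Hom M N) : Prop := ∀ i, Function.Injective (f.f i)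

/-- Purity of (the image of) a morphism, via the concrete characterization
`sN_i ⊓ P_{i+1} = sP_i` and `tN_{i+1} ⊓ P_i = tP_{i+1}`. -/
def IsPure {M N : GM k} (f : Hom M N) : Prop :=
  ∀ i,
    LinearMap.range (N.s i) ⊓ LinearMap.range (f.f (i + 1)) =
      LinearMap.range ((N.s i).comp (f.f i)) ∧
    LinearMap.range (N.t i) ⊓ LinearMap.range (f.f i) =
      LinearMap.range ((N.t i).comp (f.f (i + 1)))

/-- Index `(m, I)` of a string module: `0 ≤ m ≤ ∞` and `I ⊆ {1, …, m}`. -/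
structure StringIndex where
  m : ℕ∞
  I : Set ℕ
  hI : ∀ i ∈ I, 1 ≤ i ∧ (i : ℕ∞) ≤ m

variable (k)

/-- Degree-`i` component of the `n`-fold suspension of the string module `M(m,I)`:
a copy of `k` if `n ≤ i ≤ n + m`, and `0` otherwise. -/
def SC (n : ℕ) (σ : StringIndex) (i : ℕ) : Submodule k k :=
  if n ≤ i ∧ (i : ℕ∞) ≤ (n : ℕ∞) + σ.m then ⊤ else ⊥

lemma SC_top (n : ℕ) (σ : StringIndex) (i : ℕ) (h1 : n ≤ i)
    (h2 : (i : ℕ∞) ≤ (n : ℕ∞) + σ.m) : SC k n σ i = ⊤ := by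
  simp [SC, h1, h2]

/-- The `s`-multiplication on the suspended string module. -/
noncomputable def smap (n : ℕ) (σ : StringIndex) (i : ℕ) :
    SC k n σ i →ₗ[k] SC k n σ (i + 1) :=
  if h : ((i + 1 : ℕ) : ℕ∞) ≤ (n : ℕ∞) + σ.m ∧ (i + 1 - n) ∈ σ.I then
    Submodule.inclusion (by
      have h1 : 1 ≤ i + 1 - n := (σ.hI _ h.2).1
      have hn : n ≤ i + 1 := by omega
      rw [SC_top k n σ (i + 1) hn h.1]
      exact le_top)
  else 0

/-- The `t`-multiplication on the suspended string module. -/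
noncomputable def tmap (n : ℕ) (σ : StringIndex) (i : ℕ) :
    SC k n σ (i + 1) →ₗ[k] SC k n σ i :=
  if h : n ≤ i ∧ (i + 1 - n) ∉ σ.I then
    Submodule.inclusion (by
      by_cases hc : n ≤ i + 1 ∧ ((i + 1 : ℕ) : ℕ∞) ≤ (n : ℕ∞) + σ.m
      · have hi : (i : ℕ∞) ≤ (n : ℕ∞) + σ.m :=
          le_trans (by exact_mod_cast Nat.le_succ i) hc.2
        rw [SC_top k n σ i h.1 hi]
        exact le_top
      · have hcc : ¬(((i + 1 : ℕ) : ℕ∞) ≤ (n : ℕ∞) + σ.m) :=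
          fun hh => hc ⟨by omega, hh⟩
        have : SC k n σ (i + 1) = ⊥ := by
          rw [SC, if_neg (fun hh => hcc hh.2)]
        rw [this]; exact bot_le)
  else 0

/-- The `n`-fold suspension `Σⁿ M(m, I)` of the string module `M(m, I)`. -/
noncomputable def SM (n : ℕ) (σ : StringIndex) : GM k where
  M i := SC k n σ i
  s i := smap k n σ i
  t i := tmap k n σ i
  ts i x := by
    by_cases h : ((i + 1 : ℕ) : ℕ∞) ≤ (n : ℕ∞) + σ.m ∧ (i + 1 - n) ∈ σ.I
    · have h' : ¬(n ≤ i ∧ (i + 1 - n) ∉ σ.I) := fun hc => hc.2 h.2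
      simp only [tmap, dif_neg h', LinearMap.zero_apply]
    · simp only [smap, dif_neg h, LinearMap.zero_apply, map_zero]
  st i x := by
    by_cases h : n ≤ i ∧ (i + 1 - n) ∉ σ.I
    · have h' : ¬(((i + 1 : ℕ) : ℕ∞) ≤ (n : ℕ∞) + σ.m ∧ (i + 1 - n) ∈ σ.I) :=
        fun hc => h.2 hc.2
      simp only [smap, dif_neg h', LinearMap.zero_apply]
    · simp only [tmap, dif_neg h, LinearMap.zero_apply, map_zero]

/-- The defining generator `x_i` of the (suspended) string module. -/
def xg (n : ℕ) (σ : StringIndex) (i : ℕ) (h1 : n ≤ i)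
    (h2 : (i : ℕ∞) ≤ (n : ℕ∞) + σ.m) : SC k n σ i :=
  ⟨1, by rw [SC_top k n σ i h1 h2]; trivial⟩

variable {k}

/-- A graded module is nontrivial. -/
def Nontriv (M : GM k) : Prop := ∃ i, ∃ x : M.M i, x ≠ 0

/-- Binary direct sum of graded `A`-modules. -/
def dsum (M N : GM k) : GM k where
  M i := M.M i × N.M i
  s i := (M.s i).prodMap (N.s i)
  t i := (M.t i).prodMap (N.t i)
  ts i x := by cases x with | mk a b => simp [M.ts, N.ts, Prod.ext_iff]
  st i x := by cases x with | mk a b => simp [M.st, N.st, Prod.ext_iff]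

/-- Indecomposability of a graded `A`-module. -/
def Indec (M : GM k) : Prop :=
  Nontriv M ∧ ∀ N P : GM k, GMIso M (dsum N P) → ¬(Nontriv N ∧ Nontriv P)

/-- Direct sum of a family of graded `A`-modules. -/
noncomputable def gdsum {ι : Type} (F : ι → GM k) : GM k where
  M i := Π₀ j : ι, (F j).M i
  s i := DFinsupp.mapRange.linearMap (fun j => (F j).s i)
  t i := DFinsupp.mapRange.linearMap (fun j => (F j).t i)
  ts i x := by
    ext j
    simp [(F j).ts]
  st i x := by
    ext j
    simp [(F j).st]

/-- The (lexicographic-type) well-order on string indices: `t` before `s`. -/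
def idxLE (σ τ : StringIndex) : Prop :=
  (σ.m ≤ τ.m ∧ τ.I ∩ {j | (j : ℕ∞) ≤ σ.m} = σ.I) ∨
  (∃ i ∈ τ.I, i ∉ σ.I ∧ σ.I ∩ {j | j < i} = τ.I ∩ {j | j < i})

end Paper

namespace Paper

variable {k : Type} [Field k]

lemma scalar_of_gen {p : Submodule k k} (g : p →ₗ[k] p) (e : p) (he : (e : k) = 1)
    (c : k) (hge : g e = c • e) : ∀ x, g x = c • x := by
  intro x
  have hx : x = (x : k) • e := Subtype.ext (by simp [he])
  rw [hx, map_smul, hge, smul_comm]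

lemma mem_SC_zero (σ : StringIndex) {i : ℕ} (hi : (i : ℕ∞) ≤ σ.m) :
    (1 : k) ∈ SC k 0 σ i := by
  rw [SC_top k 0 σ i (Nat.zero_le i) (by simpa using hi)]
  trivial

lemma smap_coe (σ : StringIndex) {i : ℕ} (hi : ((i + 1 : ℕ) : ℕ∞) ≤ σ.m)
    (hI : (i + 1) ∈ σ.I) (x : SC k 0 σ i) :
    ((smap k 0 σ i x : SC k 0 σ (i + 1)) : k) = (x : k) := by
  have hcond : ((i + 1 : ℕ) : ℕ∞) ≤ ((0 : ℕ) : ℕ∞) + σ.m ∧ (i + 1 - 0) ∈ σ.I :=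
    ⟨by simpa using hi, by simpa using hI⟩
  rw [smap, dif_pos hcond]
  rfl

lemma tmap_coe (σ : StringIndex) {i : ℕ} (hI : (i + 1) ∉ σ.I)
    (x : SC k 0 σ (i + 1)) :
    ((tmap k 0 σ i x : SC k 0 σ i) : k) = (x : k) := by
  have hcond : 0 ≤ i ∧ (i + 1 - 0) ∉ σ.I := ⟨Nat.zero_le i, by simpa using hI⟩
  rw [tmap, dif_pos hcond]
  rfl

/-- The value in `k` of an element of the string module. -/
def gv (σ : StringIndex) (i : ℕ) : (SM k 0 σ).M i →ₗ[k] k := (SC k 0 σ i).subtype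

lemma gv_inj (σ : StringIndex) (i : ℕ) : Function.Injective (gv (k := k) σ i) :=
  Subtype.val_injective

lemma key_scalar (σ : StringIndex) (f : Hom (SM k 0 σ) (SM k 0 σ)) :
    ∀ i x, f.f i x = gv σ 0 (f.f 0 ⟨1, mem_SC_zero σ (by simp)⟩) • x := by
  set e0 : (SM k 0 σ).M 0 := ⟨1, mem_SC_zero σ (by simp)⟩ with he0
  set c : k := gv σ 0 (f.f 0 e0) with hcdef
  have main : ∀ i : ℕ, ((i : ℕ∞) ≤ σ.m) → ∀ x, f.f i x = c • x := by
    intro i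
    induction i with
    | zero =>
      intro _ x
      refine scalar_of_gen (f.f 0) e0 rfl c (gv_inj σ 0 ?_) x
      show gv σ 0 (f.f 0 e0) = gv σ 0 (c • e0)
      rw [map_smul]
      have h1 : gv (k := k) σ 0 e0 = 1 := rfl
      rw [h1, smul_eq_mul, mul_one, hcdef]
    | succ i ih =>
      intro hi x
      have hi' : (i : ℕ∞) ≤ σ.m :=
        le_trans (by exact_mod_cast Nat.le_succ i) hi
      set ei : (SM k 0 σ).M i := ⟨1, mem_SC_zero σ hi'⟩ with hei
      set e1 : (SM k 0 σ).M (i + 1) := ⟨1, mem_SC_zero σ hi⟩ with he1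
      have hfi : f.f i ei = c • ei := ih hi' ei
      have hkey : f.f (i + 1) e1 = c • e1 := by
        by_cases hI : (i + 1) ∈ σ.I
        · -- use s
          have hse : (SM k 0 σ).s i ei = e1 := by
            refine Subtype.ext ?_
            exact smap_coe σ hi hI ei
          have hcomm := f.comm_s i ei
          rw [hse, hfi] at hcomm
          refine gv_inj σ (i + 1) ?_
          show gv σ (i + 1) (f.f (i+1) e1) = gv σ (i + 1) (c • e1)
          have h1 : gv (k := k) σ (i + 1) ((SM k 0 σ).s i (c • ei)) = c := by
            show ((smap k 0 σ i (c • ei) : SC k 0 σ (i + 1)) : k) = c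
            refine (smap_coe σ hi hI (c • ei)).trans ?_
            show c • (1 : k) = c
            simp
          rw [hcomm, h1, map_smul,
            show gv (k := k) σ (i + 1) e1 = 1 from rfl]
          simp
        · -- use t
          have hte : (SM k 0 σ).t i e1 = ei := by
            refine Subtype.ext ?_
            exact tmap_coe σ hI e1
          have hcomm := f.comm_t i e1
          rw [hte, hfi] at hcomm
          refine gv_inj σ (i + 1) ?_
          have hv1 : gv (k := k) σ i ((SM k 0 σ).t i (f.f (i+1) e1)) = gv σ (i+1) (f.f (i+1) e1) := by
            exact tmap_coe σ hI _
          have hv2 : gv (k := k) σ i (c • ei) = c := by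
            show c • (1 : k) = c
            simp
          have := congrArg (gv (k := k) σ i) hcomm
          rw [hv2, hv1] at this
          rw [← this, map_smul,
            show gv (k := k) σ (i + 1) e1 = 1 from rfl]
          simp
      exact scalar_of_gen (f.f (i + 1)) e1 rfl c hkey x
  intro i x
  by_cases hi : (i : ℕ∞) ≤ σ.m
  · exact main i hi x
  · have hbot : SC k 0 σ i = ⊥ := by
      rw [SC, if_neg]
      intro h
      exact hi (by simpa using h.2)
    have hx0 : gv (k := k) σ i x = 0 := by
      have hm : gv (k := k) σ i x ∈ (⊥ : Submodule k k) := hbot ▸ x.2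
      exact (Submodule.mem_bot k).mp hm
    have hx : x = 0 := gv_inj σ i (by simpa using hx0)
    rw [hx]
    simp

/-- the graded endomorphism ring of `M(m,I)` is isomorphic to `k`
(each endomorphism is multiplication by a unique scalar); in particular it is
local (each endomorphism `f` has `f` or `1 - f` invertible). -/
theorem string_module_endomorphisms
    (k : Type) [Field k] (σ : StringIndex) :
    (∀ f : Hom (SM k 0 σ) (SM k 0 σ),
        ∃! c : k, ∀ i x, f.f i x = c • x) ∧
    (∀ f : Hom (SM k 0 σ) (SM k 0 σ),
        (∀ i, Function.Bijective (f.f i)) ∨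
        (∀ i, Function.Bijective (fun x : (SM k 0 σ).M i => x - f.f i x))) := by
  constructor
  · intro f
    refine ⟨_, key_scalar σ f, ?_⟩
    intro c' hc'
    have h1 := hc' 0 ⟨1, mem_SC_zero σ (by simp)⟩
    have h2 := key_scalar σ f 0 ⟨1, mem_SC_zero σ (by simp)⟩
    have h3 := h1.symm.trans h2
    have hv := congrArg (gv (k := k) σ 0) h3
    erw [map_smul, map_smul] at hv
    have hone : gv (k := k) σ 0 (⟨1, mem_SC_zero σ (by simp)⟩ : (SM k 0 σ).M 0) = 1 := rfl
    rw [hone] at hv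
    simpa using hv
  · intro f
    set c : k := gv σ 0 (f.f 0 ⟨1, mem_SC_zero σ (by simp)⟩) with hc
    have hf := key_scalar σ f
    by_cases hc0 : c = 0
    · right
      intro i
      have : (fun x : (SM k 0 σ).M i => x - f.f i x) = id := by
        funext x
        rw [hf i x, ← hc, hc0]
        simp
      rw [this]
      exact Function.bijective_id
    · left
      intro i
      constructor
      · intro x y hxy
        rw [hf i x, hf i y, ← hc] at hxy
        exact smul_right_injective _ hc0 hxy
      · intro y
        exact ⟨c⁻¹ • y, by rw [hf i, ← hc, smul_smul, mul_inv_cancel₀ hc0, one_smul]⟩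

end Paper
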